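/- arXiv:2301.07664 — 8 statements merged into one kernel-verified Lean document; each statement's English description precedes it below -/
import Mathlib

section
/- Let R be a finite local principal ideal ring with maximal ideal 𝔭 = πR, nilpotency index a, and let e = ord_𝔭(p). Suppose r ∈ R with ord_𝔭(r − 1) = m and mp > m + e. Then for every n ∈ ℕ, either r^{p^n} = 1 or ord_𝔭(r^{p^n} − 1) = m + ne. -/
/-!
Write `r = 1 + x` with `ord x = m`. In the binomial expansion of `(1 + x) ^ p - 1 - p x` the
middle terms are divisible by `p x²` and the last one is `x ^ p ∈ 𝔭 ^ (m p)`, so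
`r ^ p - 1 ≡ p x` modulo `𝔭 ^ (m + e + 1)`. Because `𝔭 = (π)`, orders are additive unless the
product lies in `𝔭 ^ (m + e) = 0` (Nakayama), in which case `r ^ p = 1`. Hence
`ord (r ^ p - 1) = m + e`, and `m + e` again satisfies the hypothesis, so one inducts on `n`.
-/

open IsLocalRing

section

variable {R : Type*} [CommRing R]

/-- `ExactOrd I k x` says that `ord_I x = k`. -/
def ExactOrd (I : Ideal R) (k : ℕ) (x : R) : Prop :=
  x ∈ I ^ k ∧ x ∉ I ^ (k + 1)

theorem ExactOrd.of_sub_mem {I : Ideal R} {k : ℕ} {x y : R} (hx : ExactOrd I k x)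
    (hxy : y - x ∈ I ^ (k + 1)) : ExactOrd I k y := by
  have hxy' : y - x ∈ I ^ k := Ideal.pow_le_pow_right k.le_succ hxy
  refine ⟨by simpa using add_mem hxy' hx.1, fun hy => hx.2 ?_⟩
  simpa using sub_mem hy hxy

theorem pow_mul_choose_mem_pow {I : Ideal R} {p m e k : ℕ} (hp : p.Prime) {x : R}
    (hx : x ∈ I ^ m) (hpe : (p : R) ∈ I ^ e) (hmp : m + e < m * p) (hk : 2 ≤ k)
    (hkp : k ≤ p) : x ^ k * p.choose k ∈ I ^ (m + e + 1) := by
  have hm : 1 ≤ m := Nat.one_le_iff_ne_zero.2 (by rintro rfl; simp at hmp)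
  rcases hkp.lt_or_eq with hkp | rfl
  · obtain ⟨t, ht⟩ := hp.dvd_choose_self (by omega) hkp
    have hxk : x ^ k ∈ I ^ (m * k) := pow_mul I m k ▸ Ideal.pow_mem_pow hx k
    have : x ^ k * p ∈ I ^ (m * k + e) := pow_add I _ _ ▸ Ideal.mul_mem_mul hxk hpe
    rw [ht, Nat.cast_mul, ← mul_assoc]
    exact Ideal.pow_le_pow_right (by nlinarith) (Ideal.mul_mem_right _ _ this)
  · rw [Nat.choose_self, Nat.cast_one, mul_one]
    exact Ideal.pow_le_pow_right hmp (pow_mul I m k ▸ Ideal.pow_mem_pow hx k)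

theorem one_add_pow_prime_sub_mem_pow {I : Ideal R} {p m e : ℕ} (hp : p.Prime) {x : R}
    (hx : x ∈ I ^ m) (hpe : (p : R) ∈ I ^ e) (hmp : m + e < m * p) :
    (1 + x) ^ p - 1 - p * x ∈ I ^ (m + e + 1) := by
  obtain ⟨q, rfl⟩ : ∃ q, p = q + 2 := ⟨p - 2, by have := hp.two_le; omega⟩
  have hexpand : (1 + x) ^ (q + 2) - 1 - ((q + 2 : ℕ) : R) * x =
      ∑ i ∈ Finset.range (q + 1), x ^ (i + 2) * (q + 2).choose (i + 2) := by
    rw [add_comm, add_pow, Finset.sum_range_succ', Finset.sum_range_succ']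
    simp [mul_comm]
  rw [hexpand]
  refine Ideal.sum_mem _ fun i hi => ?_
  exact pow_mul_choose_mem_pow hp hx hpe hmp (by omega) (by simp at hi; omega)

section LocalRing

variable [IsLocalRing R] {π : R} (hπ : Ideal.span {π} = maximalIdeal R)
include hπ

theorem maximalIdeal_pow_eq_span_pow (k : ℕ) : maximalIdeal R ^ k = Ideal.span {π ^ k} := by
  rw [← hπ, Ideal.span_singleton_pow]

theorem maximalIdeal_pow_eq_bot_of_le_pow_succ {k : ℕ}
    (h : maximalIdeal R ^ k ≤ maximalIdeal R ^ (k + 1)) : maximalIdeal R ^ k = ⊥ := by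
  refine Submodule.eq_bot_of_le_smul_of_le_jacobson_bot (maximalIdeal R) _ ?_ ?_
    (maximalIdeal_le_jacobson ⊥)
  · rw [maximalIdeal_pow_eq_span_pow hπ]
    exact Submodule.fg_span_singleton _
  · rwa [Ideal.smul_eq_mul, ← pow_succ']

theorem ExactOrd.exists_isUnit_mul {k : ℕ} {x : R} (hx : ExactOrd (maximalIdeal R) k x) :
    ∃ u, IsUnit u ∧ x = u * π ^ k := by
  have hxk := hx.1
  rw [maximalIdeal_pow_eq_span_pow hπ, Ideal.mem_span_singleton'] at hxk
  obtain ⟨u, rfl⟩ := hxk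
  refine ⟨u, of_not_not fun hu => hx.2 ?_, rfl⟩
  rw [pow_succ']
  exact Ideal.mul_mem_mul ((mem_maximalIdeal u).2 hu)
    (maximalIdeal_pow_eq_span_pow hπ k ▸ Ideal.mem_span_singleton_self _)

theorem ExactOrd.mul {j k : ℕ} {x y : R} (hx : ExactOrd (maximalIdeal R) j x)
    (hy : ExactOrd (maximalIdeal R) k y) (hne : maximalIdeal R ^ (j + k) ≠ ⊥) :
    ExactOrd (maximalIdeal R) (j + k) (x * y) := by
  refine ⟨pow_add (maximalIdeal R) j k ▸ Ideal.mul_mem_mul hx.1 hy.1, fun hxy => hne ?_⟩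
  obtain ⟨u, hu, rfl⟩ := hx.exists_isUnit_mul hπ
  obtain ⟨v, hv, rfl⟩ := hy.exists_isUnit_mul hπ
  refine maximalIdeal_pow_eq_bot_of_le_pow_succ hπ ?_
  rw [maximalIdeal_pow_eq_span_pow hπ (j + k), Ideal.span_singleton_le_iff_mem,
    ← Ideal.unit_mul_mem_iff_mem _ (hu.mul hv)]
  convert hxy using 1
  ring

theorem ExactOrd.pow_prime_sub_one {p m e : ℕ} (hp : p.Prime) {r : R}
    (hr : ExactOrd (maximalIdeal R) m (r - 1)) (hpe : ExactOrd (maximalIdeal R) e (p : R))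
    (hmp : m + e < m * p) : r ^ p = 1 ∨ ExactOrd (maximalIdeal R) (m + e) (r ^ p - 1) := by
  have hlinear : r ^ p - 1 - (r - 1) * p ∈ maximalIdeal R ^ (m + e + 1) := by
    simpa [mul_comm] using one_add_pow_prime_sub_mem_pow hp hr.1 hpe.1 hmp
  by_cases hbot : maximalIdeal R ^ (m + e) = ⊥
  · left
    have hmul : (r - 1) * p ∈ maximalIdeal R ^ (m + e) :=
      pow_add (maximalIdeal R) m e ▸ Ideal.mul_mem_mul hr.1 hpe.1
    have hmem : r ^ p - 1 ∈ maximalIdeal R ^ (m + e) :=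
      (Submodule.sub_mem_iff_left _ hmul).1 (Ideal.pow_le_pow_right (m + e).le_succ hlinear)
    rwa [hbot, Ideal.mem_bot, sub_eq_zero] at hmem
  · exact .inr ((hr.mul hπ hpe hbot).of_sub_mem hlinear)

theorem ExactOrd.pow_prime_pow_sub_one {p m e : ℕ} (hp : p.Prime) {r : R}
    (hr : ExactOrd (maximalIdeal R) m (r - 1)) (hpe : ExactOrd (maximalIdeal R) e (p : R))
    (hmp : m + e < m * p) (n : ℕ) :
    r ^ p ^ n = 1 ∨ ExactOrd (maximalIdeal R) (m + n * e) (r ^ p ^ n - 1) := by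
  induction n with
  | zero => simpa using Or.inr hr
  | succ n ih =>
    rw [pow_succ, pow_mul, add_one_mul, ← add_assoc]
    rcases ih with hone | hord
    · exact .inl (by rw [hone, one_pow])
    · have hmp' : m + n * e + e < (m + n * e) * p := by
        nlinarith [Nat.le_mul_of_pos_right (n * e) hp.pos]
      exact hord.pow_prime_sub_one hπ hp hpe hmp'

end LocalRing

end

theorem stmt6_general {R : Type*} [CommRing R] [IsLocalRing R]
    (π : R) (hπ : Ideal.span {π} = IsLocalRing.maximalIdeal R)
    (p e m : ℕ) (hp : p.Prime)
    (hpm : (p : R) ∈ IsLocalRing.maximalIdeal R ^ e)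
    (hpm' : (p : R) ∉ IsLocalRing.maximalIdeal R ^ (e + 1))
    (r : R) (hm : r - 1 ∈ IsLocalRing.maximalIdeal R ^ m)
    (hm' : r - 1 ∉ IsLocalRing.maximalIdeal R ^ (m + 1))
    (hineq : m + e < m * p) :
    ∀ n : ℕ, r ^ p ^ n = 1 ∨
      (r ^ p ^ n - 1 ∈ IsLocalRing.maximalIdeal R ^ (m + n * e) ∧
       r ^ p ^ n - 1 ∉ IsLocalRing.maximalIdeal R ^ (m + n * e + 1)) :=
  ExactOrd.pow_prime_pow_sub_one hπ hp ⟨hm, hm'⟩ ⟨hpm, hpm'⟩ hineq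

theorem stmt6 {R : Type*} [CommRing R] [IsLocalRing R] [IsPrincipalIdealRing R] [Finite R]
    (π : R) (hπ : Ideal.span {π} = IsLocalRing.maximalIdeal R)
    (p e m a : ℕ) (hp : p.Prime)
    (hchar : (p : R) ∈ IsLocalRing.maximalIdeal R)
    (hpm : (p : R) ∈ IsLocalRing.maximalIdeal R ^ e)
    (hpm' : (p : R) ∉ IsLocalRing.maximalIdeal R ^ (e + 1))
    (ha : IsLocalRing.maximalIdeal R ^ a = ⊥)
    (hmin : ∀ l < a, IsLocalRing.maximalIdeal R ^ l ≠ ⊥)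
    (r : R) (hm : r - 1 ∈ IsLocalRing.maximalIdeal R ^ m)
    (hm' : r - 1 ∉ IsLocalRing.maximalIdeal R ^ (m + 1))
    (hineq : m + e < m * p) :
    ∀ n : ℕ, r ^ p ^ n = 1 ∨
      (r ^ p ^ n - 1 ∈ IsLocalRing.maximalIdeal R ^ (m + n * e) ∧
       r ^ p ^ n - 1 ∉ IsLocalRing.maximalIdeal R ^ (m + n * e + 1)) :=
  stmt6_general π hπ p e m hp hpm hpm' r hm hm' hineq
end

section
/- Let R be a finite local principal ideal ring with maximal ideal 𝔭 = πR, ramification index e = ord_𝔭(p), coefficient ring R_ω, and let q ∈ R_ω[Y] be a p-Eisenstein polynomial of degree e. If u ∈ R satisfies q(u) = 0, then u is a uniformizer of R, i.e. ord_𝔭(u) = 1. -/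
/-!
Reducing `q(u) = 0` modulo `𝔭` gives `u ^ e ∈ 𝔭`, so `u ∈ 𝔭`. If moreover `u ∈ 𝔭²`, then in
`q(u) = 0` every term other than the constant one lies in `𝔭^(e+1)`: the middle terms are
`p · c · uⁱ` with `p ∈ 𝔭^e` and `u ∈ 𝔭`, and `uᵉ ∈ 𝔭^(2e)`. Hence the constant term `p · v`,
with `v` a unit, lies in `𝔭^(e+1)`, contradicting `ord_𝔭(p) = e`.
-/

open Polynomial

namespace Polynomial.IsWeaklyEisensteinAt

variable {R : Type*} [CommRing R] {f : R[X]} {x : R}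

theorem mem_of_isRoot_of_monic {P : Ideal R} [hP : P.IsPrime] (hf : f.IsWeaklyEisensteinAt P)
    (hroot : f.IsRoot x) (hmo : f.Monic) : x ∈ P :=
  hP.mem_of_pow_mem _ (hf.pow_natDegree_le_of_root_of_monic_mem hroot hmo _ le_rfl)

theorem coeff_zero_mem_mul_of_isRoot_of_monic {I J : Ideal R} (hf : f.IsWeaklyEisensteinAt I)
    (hroot : f.IsRoot x) (hmo : f.Monic) (hx : x ∈ J) (hxn : x ^ f.natDegree ∈ I * J) :
    f.coeff 0 ∈ I * J := by
  have hterm : ∀ i ∈ Finset.range f.natDegree, f.coeff (i + 1) * x ^ (i + 1) ∈ I * J := by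
    intro i hi
    rcases Nat.lt_or_ge (i + 1) f.natDegree with hlt | hge
    · rw [pow_succ, ← mul_assoc]
      exact Ideal.mul_mem_mul (I.mul_mem_right _ (hf.mem hlt)) hx
    · rw [show i + 1 = f.natDegree by grind, hmo.coeff_natDegree, one_mul]
      exact hxn
  have hsum := hroot.eq_zero
  rw [eval_eq_sum_range, Finset.sum_range_succ', pow_zero, mul_one] at hsum
  rw [eq_neg_of_add_eq_zero_right hsum]
  exact neg_mem (Ideal.sum_mem _ hterm)

end Polynomial.IsWeaklyEisensteinAt

theorem Ideal.pow_mem_pow_succ_of_mem_sq {R : Type*} [CommSemiring R] {I : Ideal R} {x : R}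
    (hx : x ∈ I ^ 2) {n : ℕ} (hn : 1 ≤ n) : x ^ n ∈ I ^ (n + 1) := by
  have hx2n : x ^ n ∈ I ^ (2 * n) := pow_mul I 2 n ▸ Ideal.pow_mem_pow hx n
  exact Ideal.pow_le_pow_right (by omega) hx2n

theorem stmt12_general {R : Type*} [CommRing R] [IsLocalRing R]
    (p e : ℕ) (hpmem : (p : R) ∈ IsLocalRing.maximalIdeal R)
    (he : (p : R) ∈ IsLocalRing.maximalIdeal R ^ e)
    (he' : (p : R) ∉ IsLocalRing.maximalIdeal R ^ (e + 1))
    (R_ω : Subring R) (q : Polynomial R) (hmonic : q.Monic) (hdeg : q.natDegree = e)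
    (heis : ∀ i < e, ∃ c ∈ R_ω, q.coeff i = (p : R) * c)
    (h0 : ∃ v ∈ R_ω, IsUnit v ∧ q.coeff 0 = (p : R) * v)
    (u : R) (hu : q.eval u = 0) :
    u ∈ IsLocalRing.maximalIdeal R ∧ u ∉ IsLocalRing.maximalIdeal R ^ 2 := by
  set M := IsLocalRing.maximalIdeal R
  have hEis : ∀ I : Ideal R, (p : R) ∈ I → q.IsWeaklyEisensteinAt I := fun I hpI =>
    ⟨fun {i} hi => by
      obtain ⟨c, -, hc⟩ := heis i (hdeg ▸ hi)
      exact hc ▸ I.mul_mem_right c hpI⟩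
  have huM : u ∈ M := (hEis M hpmem).mem_of_isRoot_of_monic hu hmonic
  refine ⟨huM, fun hu2 => he' ?_⟩
  have he1 : 1 ≤ e := Nat.one_le_iff_ne_zero.mpr fun he0 => he' (by simpa [he0] using hpmem)
  obtain ⟨v, -, hv, hpv⟩ := h0
  have hcoeff0 : q.coeff 0 ∈ M ^ e * M :=
    (hEis _ he).coeff_zero_mem_mul_of_isRoot_of_monic hu hmonic huM
      (by rw [hdeg, ← pow_succ]; exact Ideal.pow_mem_pow_succ_of_mem_sq hu2 he1)
  rwa [← pow_succ, hpv, Ideal.mul_unit_mem_iff_mem _ hv] at hcoeff0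

theorem stmt12 {R : Type*} [CommRing R] [IsLocalRing R] [IsPrincipalIdealRing R] [Finite R]
    (π : R) (hπ : Ideal.span {π} = IsLocalRing.maximalIdeal R)
    (p e : ℕ) (hp : p.Prime) (hpmem : (p : R) ∈ IsLocalRing.maximalIdeal R)
    (he : (p : R) ∈ IsLocalRing.maximalIdeal R ^ e)
    (he' : (p : R) ∉ IsLocalRing.maximalIdeal R ^ (e + 1))
    (R_ω : Subring R) (q : Polynomial R) (hmonic : q.Monic) (hdeg : q.natDegree = e)
    (hcoeff : ∀ i, q.coeff i ∈ R_ω)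
    (heis : ∀ i < e, ∃ c ∈ R_ω, q.coeff i = (p : R) * c)
    (h0 : ∃ v ∈ R_ω, IsUnit v ∧ q.coeff 0 = (p : R) * v)
    (u : R) (hu : q.eval u = 0) :
    u ∈ IsLocalRing.maximalIdeal R ∧ u ∉ IsLocalRing.maximalIdeal R ^ 2 :=
  stmt12_general p e hpmem he he' R_ω q hmonic hdeg heis h0 u hu
end

section
/- Let R be a finite local principal ideal ring with maximal ideal 𝔭 = πR of nilpotency index a, coefficient ring R_ω, and canonical representatives ρ ⊆ R_ω. Then the set U of uniformizers of R (elements u with ord_𝔭(u) = 1) equals {t(π)·π : t ∈ R_ω[Y], t(0) ∈ R_ω^×}, and |U| = (|k| − 1)·|k|^{a−2}, where k is the residue field (assuming a ≥ 2). -/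
/-!
Since `𝔪 ^ a = 0`, the ring `R` is `𝔪`-adically complete, hence Henselian, and Hensel's lemma
applied to `X ^ q - X` (whose derivative is `-1` modulo `𝔪`) puts a root of `X ^ q - X`, hence an
element of `R_ω`, in every residue class. Expanding in base `π` with such digits writes every
element as `t(π)` with `t ∈ R_ω[X]`; the uniformizers are the `u * π` with `u` a unit, and `t(π)`
is a unit exactly when `t(0)` is. For the count, `r ↦ r * π ^ i` induces
`R ⧸ 𝔪 ≃ 𝔪 ^ i ⧸ 𝔪 ^ (i + 1)` as long as `𝔪 ^ i ≠ 0`, so `|𝔪 ^ i| = q ^ (a - i)`.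
-/

open IsLocalRing Polynomial

namespace Ideal

variable {R : Type*} [CommRing R] {I : Ideal R} {a : ℕ}

theorem pow_eq_bot_of_pow_le_pow_succ {i : ℕ} (hia : i ≤ a) (ha : I ^ a = ⊥)
    (h : I ^ i ≤ I ^ (i + 1)) : I ^ i = ⊥ := by
  have hle : ∀ k, I ^ i ≤ I ^ (i + k) := by
    intro k
    induction k with
    | zero => exact le_rfl
    | succ k ih =>
      calc I ^ i ≤ I ^ (i + 1) := h
        _ = I ^ i * I := pow_succ _ _
        _ ≤ I ^ (i + k) * I := mul_mono_left ih
        _ = I ^ (i + (k + 1)) := by rw [← pow_succ, add_assoc]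
  obtain ⟨k, rfl⟩ := Nat.exists_eq_add_of_le hia
  exact le_bot_iff.mp (ha ▸ hle k)

theorem isAdicComplete_of_pow_eq_bot (ha : I ^ a = ⊥) : IsAdicComplete I R := by
  have heq : ∀ {x y : R} {n : ℕ}, a ≤ n → x ≡ y [SMOD (I ^ n • ⊤ : Ideal R)] → x = y := by
    intro x y n hn h
    have hn : I ^ n = ⊥ := le_bot_iff.mp (ha ▸ pow_le_pow_right hn)
    rwa [smul_eq_mul, mul_top, SModEq.sub_mem, hn, mem_bot, sub_eq_zero] at h
  refine { haus' := fun x hx => heq le_rfl (hx a), prec' := fun f hf => ⟨f a, fun n => ?_⟩ }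
  rcases le_total n a with hn | hn
  · exact hf hn
  · rw [heq le_rfl (hf hn)]

end Ideal

theorem exists_coeff_mem_sub_eval_mem_span_pow {R : Type*} [CommRing R] {π : R} {S : Subring R}
    (hS : ∀ v, ∃ c ∈ S, v - c ∈ Ideal.span {π}) (n : ℕ) (v : R) :
    ∃ t : R[X], (∀ i, t.coeff i ∈ S) ∧ v - t.eval π ∈ Ideal.span {π} ^ n := by
  induction n generalizing v with
  | zero => exact ⟨0, fun _ => S.zero_mem, by simp⟩
  | succ n ih =>
    obtain ⟨c, hcS, hvc⟩ := hS v
    obtain ⟨w, hw⟩ := Ideal.mem_span_singleton'.mp hvc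
    obtain ⟨t, htS, hwt⟩ := ih w
    refine ⟨C c + X * t, fun i => ?_, ?_⟩
    · cases i with
      | zero => simpa using hcS
      | succ i => simpa using htS i
    · have hexp : v - (C c + X * t).eval π = (w - t.eval π) * π := by
        simp only [eval_add, eval_C, eval_mul, eval_X]
        linear_combination -hw
      rw [hexp, pow_succ]
      exact Ideal.mul_mem_mul hwt (Ideal.mem_span_singleton_self π)

section IsLocalRing

variable {R : Type*} [CommRing R] [IsLocalRing R]

theorem exists_pow_card_eq_self_sub_mem_maximalIdeal [HenselianRing R (maximalIdeal R)]
    [Finite (R ⧸ maximalIdeal R)] (v : R) :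
    ∃ c : R, c ^ Nat.card (R ⧸ maximalIdeal R) = c ∧ v - c ∈ maximalIdeal R := by
  set q := Nat.card (R ⧸ maximalIdeal R)
  let := Ideal.Quotient.field (maximalIdeal R)
  have : Fintype (R ⧸ maximalIdeal R) := Fintype.ofFinite _
  have hq : (q : R ⧸ maximalIdeal R) = 0 := by
    simp only [q, Nat.card_eq_fintype_card]
    exact FiniteField.cast_card_eq_zero (R ⧸ maximalIdeal R)
  have hmonic : (X ^ q - X : R[X]).Monic := by
    apply monic_X_pow_sub
    rw [degree_X]
    exact_mod_cast Finite.one_lt_card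
  have heval : (X ^ q - X : R[X]).eval v ∈ maximalIdeal R := by
    rw [← Ideal.Quotient.eq_zero_iff_mem]
    simp [q, Nat.card_eq_fintype_card, FiniteField.pow_card]
  have hderiv :
      IsUnit (Ideal.Quotient.mk (maximalIdeal R) ((X ^ q - X : R[X]).derivative.eval v)) := by
    simp [derivative_X_pow, hq]
  obtain ⟨c, hc, hvc⟩ := HenselianRing.is_henselian (X ^ q - X) hmonic v heval hderiv
  refine ⟨c, by simpa [sub_eq_zero] using hc, ?_⟩
  rw [← neg_mem_iff, neg_sub]
  exact hvc

theorem exists_coeff_mem_eq_eval [Finite (R ⧸ maximalIdeal R)] {π : R}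
    (hπ : Ideal.span {π} = maximalIdeal R) {a : ℕ} (ha : maximalIdeal R ^ a = ⊥) {S : Subring R}
    (hS : {r : R | r ^ Nat.card (R ⧸ maximalIdeal R) = r} ⊆ S) (v : R) :
    ∃ t : R[X], (∀ i, t.coeff i ∈ S) ∧ v = t.eval π := by
  have := Ideal.isAdicComplete_of_pow_eq_bot ha
  have hresidues : ∀ w : R, ∃ c ∈ S, w - c ∈ Ideal.span {π} := fun w => by
    obtain ⟨c, hc, hwc⟩ := exists_pow_card_eq_self_sub_mem_maximalIdeal w
    exact ⟨c, hS hc, hπ ▸ hwc⟩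
  obtain ⟨t, htS, hvt⟩ := exists_coeff_mem_sub_eval_mem_span_pow hresidues a v
  rw [hπ, ha, Ideal.mem_bot, sub_eq_zero] at hvt
  exact ⟨t, htS, hvt⟩

theorem isUnit_eval_iff_isUnit_coeff_zero {π : R} (hπ : π ∈ maximalIdeal R) (t : R[X]) :
    IsUnit (t.eval π) ↔ IsUnit (t.coeff 0) := by
  have hsub : t.eval π - t.coeff 0 ∈ maximalIdeal R := by
    rw [coeff_zero_eq_eval_zero]
    obtain ⟨d, hd⟩ := sub_dvd_eval_sub π 0 t
    rw [hd, sub_zero]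
    exact Ideal.mul_mem_right d _ hπ
  rw [← notMem_maximalIdeal, ← notMem_maximalIdeal, not_iff_not]
  exact ⟨fun h => by simpa using sub_mem h hsub, fun h => by simpa using add_mem hsub h⟩

theorem mem_maximalIdeal_and_not_mem_sq_iff {π : R} (hπ : Ideal.span {π} = maximalIdeal R)
    (hπ2 : π ∉ maximalIdeal R ^ 2) {x : R} :
    x ∈ maximalIdeal R ∧ x ∉ maximalIdeal R ^ 2 ↔ ∃ u, IsUnit u ∧ x = u * π := by
  have hπm : π ∈ maximalIdeal R := hπ ▸ Ideal.mem_span_singleton_self π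
  constructor
  · rintro ⟨hx, hx2⟩
    obtain ⟨u, rfl⟩ := Ideal.mem_span_singleton'.mp (hπ ▸ hx)
    refine ⟨u, notMem_maximalIdeal.mp fun hu => hx2 ?_, rfl⟩
    exact pow_two (maximalIdeal R) ▸ Ideal.mul_mem_mul hu hπm
  · rintro ⟨u, hu, rfl⟩
    exact ⟨Ideal.mul_mem_left _ u hπm, fun h => hπ2 ((Ideal.unit_mul_mem_iff_mem _ hu).mp h)⟩

theorem card_maximalIdeal_pow_eq_card_mul {π : R} (hπ : Ideal.span {π} = maximalIdeal R)
    {i : ℕ} (hi : ¬ maximalIdeal R ^ i ≤ maximalIdeal R ^ (i + 1)) :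
    Nat.card ↥(maximalIdeal R ^ i) =
      Nat.card (R ⧸ maximalIdeal R) * Nat.card ↥(maximalIdeal R ^ (i + 1)) := by
  set m := maximalIdeal R
  have hspan : m ^ i = Ideal.span {π ^ i} := by rw [← hπ, Ideal.span_singleton_pow]
  let P : Submodule R ↥(m ^ i) := Submodule.comap (Submodule.subtype (m ^ i)) (m ^ (i + 1))
  let g : R →ₗ[R] ↥(m ^ i) :=
    LinearMap.toSpanSingleton R _ ⟨π ^ i, hspan ▸ Ideal.mem_span_singleton_self _⟩
  have hg : Function.Surjective g := by
    rintro ⟨y, hy⟩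
    obtain ⟨r, rfl⟩ := Ideal.mem_span_singleton'.mp (hspan ▸ hy)
    exact ⟨r, rfl⟩
  have hker : LinearMap.ker (P.mkQ ∘ₗ g) = m := by
    ext r
    simp only [LinearMap.mem_ker, LinearMap.comp_apply, Submodule.mkQ_apply,
      Submodule.Quotient.mk_eq_zero, P, Submodule.mem_comap, g, LinearMap.toSpanSingleton_apply,
      Submodule.coe_subtype, Submodule.coe_smul, smul_eq_mul]
    constructor
    · intro hr
      by_contra hrm
      refine hi (hspan ▸ (Ideal.span_singleton_le_iff_mem _).mpr ?_)
      exact (Ideal.unit_mul_mem_iff_mem _ (notMem_maximalIdeal.mp hrm)).mp hr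
    · intro hr
      rw [pow_succ']
      exact Ideal.mul_mem_mul hr (hspan ▸ Ideal.mem_span_singleton_self _)
  let e : (R ⧸ m) ≃ₗ[R] ↥(m ^ i) ⧸ P := (Submodule.quotEquivOfEq _ _ hker.symm).trans
    ((P.mkQ ∘ₗ g).quotKerEquivOfSurjective (P.mkQ_surjective.comp hg))
  have hP : Nat.card P = Nat.card ↥(m ^ (i + 1)) := Nat.card_congr
    (Submodule.comapSubtypeEquivOfLe (Ideal.pow_le_pow_right (Nat.le_succ i))).toEquiv
  rw [Submodule.card_eq_card_quotient_mul_card P, ← Nat.card_congr e.toEquiv, hP, mul_comm]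

theorem card_maximalIdeal_pow {π : R} (hπ : Ideal.span {π} = maximalIdeal R) {a : ℕ}
    (ha : maximalIdeal R ^ a = ⊥) (hmin : ∀ j < a, maximalIdeal R ^ j ≠ ⊥) {i : ℕ} (hi : i ≤ a) :
    Nat.card ↥(maximalIdeal R ^ i) = Nat.card (R ⧸ maximalIdeal R) ^ (a - i) := by
  obtain ⟨k, rfl⟩ := Nat.exists_eq_add_of_le hi
  rw [Nat.add_sub_cancel_left]
  clear hi
  induction k generalizing i with
  | zero =>
    rw [add_zero] at ha
    simp [ha]
  | succ k ih =>
    have hstrict : ¬ maximalIdeal R ^ i ≤ maximalIdeal R ^ (i + 1) := fun h =>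
      hmin i (by omega) (Ideal.pow_eq_bot_of_pow_le_pow_succ (by omega) ha h)
    rw [card_maximalIdeal_pow_eq_card_mul hπ hstrict,
      ih (by rwa [add_right_comm, add_assoc]) (fun j hj => hmin j (by omega)), pow_succ']

theorem ncard_maximalIdeal_diff_sq [Finite R] {π : R} (hπ : Ideal.span {π} = maximalIdeal R)
    {a : ℕ} (ha2 : 2 ≤ a) (ha : maximalIdeal R ^ a = ⊥) (hmin : ∀ j < a, maximalIdeal R ^ j ≠ ⊥) :
    {u : R | u ∈ maximalIdeal R ∧ u ∉ maximalIdeal R ^ 2}.ncard =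
      (Nat.card (R ⧸ maximalIdeal R) - 1) * Nat.card (R ⧸ maximalIdeal R) ^ (a - 2) := by
  change ((maximalIdeal R : Set R) \ (maximalIdeal R ^ 2 : Ideal R)).ncard = _
  rw [Set.ncard_sdiff (Ideal.pow_le_self two_ne_zero), ← Nat.card_coe_set_eq,
    ← Nat.card_coe_set_eq]
  obtain ⟨b, rfl⟩ := Nat.exists_eq_add_of_le' ha2
  have h1 := card_maximalIdeal_pow hπ ha hmin (i := 1) (by omega)
  have h2 := card_maximalIdeal_pow hπ ha hmin (i := 2) le_add_self
  rw [pow_one, show b + 2 - 1 = b + 1 by omega] at h1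
  rw [SetLike.coe_sort_coe, SetLike.coe_sort_coe, h1, h2, Nat.add_sub_cancel, pow_succ',
    Nat.sub_mul, one_mul]

end IsLocalRing

theorem stmt13_general {R : Type*} [CommRing R] [IsLocalRing R] [Finite R]
    (π : R) (hπ : Ideal.span {π} = IsLocalRing.maximalIdeal R)
    (a : ℕ) (ha2 : 2 ≤ a) (ha : IsLocalRing.maximalIdeal R ^ a = ⊥)
    (hmin : ∀ m < a, IsLocalRing.maximalIdeal R ^ m ≠ ⊥)
    (R_ω : Subring R)
    (hρ : {r : R | r ^ Nat.card (R ⧸ IsLocalRing.maximalIdeal R) = r} ⊆ ↑R_ω) :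
    {u : R | u ∈ IsLocalRing.maximalIdeal R ∧ u ∉ IsLocalRing.maximalIdeal R ^ 2} =
      {x : R | ∃ t : Polynomial R, (∀ i, t.coeff i ∈ R_ω) ∧ IsUnit (t.coeff 0) ∧
        x = t.eval π * π} ∧
    Set.ncard {u : R | u ∈ IsLocalRing.maximalIdeal R ∧ u ∉ IsLocalRing.maximalIdeal R ^ 2} =
      (Nat.card (R ⧸ IsLocalRing.maximalIdeal R) - 1) *
        Nat.card (R ⧸ IsLocalRing.maximalIdeal R) ^ (a - 2) := by
  have : Finite (R ⧸ maximalIdeal R) := Finite.of_surjective _ Ideal.Quotient.mk_surjective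
  have hπm : π ∈ maximalIdeal R := hπ ▸ Ideal.mem_span_singleton_self π
  have hπ2 : π ∉ maximalIdeal R ^ 2 := fun h =>
    hmin 1 (by omega) (Ideal.pow_eq_bot_of_pow_le_pow_succ (by omega) ha
      (by rw [pow_one, ← hπ, Ideal.span_singleton_le_iff_mem, hπ]; exact h))
  refine ⟨?_, ncard_maximalIdeal_diff_sq hπ ha2 ha hmin⟩
  ext x
  simp only [Set.mem_ofPred_eq, mem_maximalIdeal_and_not_mem_sq_iff hπ hπ2]
  constructor
  · rintro ⟨u, hu, rfl⟩
    obtain ⟨t, htω, rfl⟩ := exists_coeff_mem_eq_eval hπ ha hρ u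
    exact ⟨t, htω, (isUnit_eval_iff_isUnit_coeff_zero hπm t).mp hu, rfl⟩
  · rintro ⟨t, -, ht0, rfl⟩
    exact ⟨t.eval π, (isUnit_eval_iff_isUnit_coeff_zero hπm t).mpr ht0, rfl⟩

theorem stmt13 {R : Type*} [CommRing R] [IsLocalRing R] [IsPrincipalIdealRing R] [Finite R]
    (π : R) (hπ : Ideal.span {π} = IsLocalRing.maximalIdeal R)
    (a : ℕ) (ha2 : 2 ≤ a) (ha : IsLocalRing.maximalIdeal R ^ a = ⊥)
    (hmin : ∀ m < a, IsLocalRing.maximalIdeal R ^ m ≠ ⊥)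
    (R_ω : Subring R)
    (hρ : {r : R | r ^ Nat.card (R ⧸ IsLocalRing.maximalIdeal R) = r} ⊆ ↑R_ω) :
    {u : R | u ∈ IsLocalRing.maximalIdeal R ∧ u ∉ IsLocalRing.maximalIdeal R ^ 2} =
      {x : R | ∃ t : Polynomial R, (∀ i, t.coeff i ∈ R_ω) ∧ IsUnit (t.coeff 0) ∧
        x = t.eval π * π} ∧
    Set.ncard {u : R | u ∈ IsLocalRing.maximalIdeal R ∧ u ∉ IsLocalRing.maximalIdeal R ^ 2} =
      (Nat.card (R ⧸ IsLocalRing.maximalIdeal R) - 1) *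
        Nat.card (R ⧸ IsLocalRing.maximalIdeal R) ^ (a - 2) :=
  stmt13_general π hπ a ha2 ha hmin R_ω hρ
end

section
/- Let K be a number field with ring of integers O_K, let A ⊆ K be an order (a subring that is a free ℤ-module of rank [K:ℚ]), and let I be an invertible fractional ideal of A. Then for every nonzero ideal J of A there exists x ∈ K with A = xI + J. -/
/-!
Since `A ⧸ J` is finite, only finitely many maximal ideals `M` contain `J`. For each of them
`I * I⁻¹ = A ⊈ M` yields `a_M ∈ I`, `b_M ∈ I⁻¹` with `a_M * b_M ∉ M`. Choosing `u_M ∉ M` lying in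
every other such maximal ideal, `x = ∑ u_M • b_M ∈ I⁻¹` satisfies `x * a_M ≡ u_M * a_M * b_M ≢ 0`
modulo `M`, so the integral ideal `x * I + J` lies in no maximal ideal.
-/

open scoped nonZeroDivisors

namespace Ideal

variable {R : Type*} [CommRing R]

theorem IsPrime.exists_notMem_forall_mem {P : Ideal R} (hP : P.IsPrime) (s : Finset (Ideal R))
    (hs : ∀ Q ∈ s, ¬Q ≤ P) : ∃ u ∉ P, ∀ Q ∈ s, u ∈ Q := by
  have : ¬s.inf id ≤ P := fun h ↦ by
    obtain ⟨Q, hQ, hQP⟩ := hP.inf_le'.mp h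
    exact hs Q hQ hQP
  obtain ⟨u, hu, huP⟩ := SetLike.not_le_iff_exists.mp this
  exact ⟨u, huP, fun Q hQ ↦ Finset.inf_le (f := id) hQ hu⟩

theorem IsPrime.sum_mul_notMem {ι : Type*} {P : Ideal R} (hP : P.IsPrime) {s : Finset ι} {i : ι}
    (hi : i ∈ s) {u c : ι → R} (hui : u i ∉ P) (hci : c i ∉ P) (hu : ∀ j ∈ s, j ≠ i → u j ∈ P) :
    ∑ j ∈ s, u j * c j ∉ P := by
  classical
  have hrest : ∑ j ∈ s.erase i, u j * c j ∈ P :=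
    P.sum_mem fun j hj ↦
      P.mul_mem_right _ (hu j (Finset.mem_of_mem_erase hj) (Finset.ne_of_mem_erase hj))
  rw [← Finset.add_sum_erase s _ hi, P.add_mem_iff_left hrest]
  exact fun h ↦ (hP.mem_or_mem h).elim hui hci

theorem finite_setOf_le_of_finite_quotient (J : Ideal R) [Finite (R ⧸ J)] :
    {M : Ideal R | J ≤ M}.Finite := by
  have : Finite (Ideal (R ⧸ J)) := Finite.of_injective _ SetLike.coe_injective
  refine (Set.finite_range (comap (Quotient.mk J))).subset
    fun M (hM : J ≤ M) ↦ ⟨M.map (Quotient.mk J), ?_⟩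
  rw [comap_map_of_surjective _ Quotient.mk_surjective, ← RingHom.ker_eq_comap_bot, mk_ker,
    sup_eq_left.mpr hM]

end Ideal

namespace FractionalIdeal

variable {R K : Type*} [CommRing R] [CommRing K] [Algebra R K] [IsFractionRing R K]

theorem algebraMap_mem_coeIdeal_iff {M : Ideal R} {c : R} :
    algebraMap R K c ∈ (M : FractionalIdeal R⁰ K) ↔ c ∈ M := by
  refine ⟨fun h ↦ ?_, mem_coeIdeal_of_mem _⟩
  obtain ⟨c', hc', hcc'⟩ := (mem_coeIdeal _).mp h
  rwa [← IsFractionRing.injective R K hcc']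

theorem sum_smul_notMem_coeIdeal {ι : Type*} {M : Ideal R} (hM : M.IsPrime) {s : Finset ι} {i : ι}
    (hi : i ∈ s) {u : ι → R} {z : ι → K} (hz : ∀ j ∈ s, z j ∈ (1 : FractionalIdeal R⁰ K))
    (hui : u i ∉ M) (hzi : z i ∉ (M : FractionalIdeal R⁰ K)) (hu : ∀ j ∈ s, j ≠ i → u j ∈ M) :
    ∑ j ∈ s, u j • z j ∉ (M : FractionalIdeal R⁰ K) := by
  choose! c hc using fun j hj ↦ (mem_one_iff R⁰).mp (hz j hj)
  have hsum : ∑ j ∈ s, u j • z j = algebraMap R K (∑ j ∈ s, u j * c j) := by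
    rw [map_sum]
    refine Finset.sum_congr rfl fun j hj ↦ ?_
    rw [map_mul, hc j hj, Algebra.smul_def]
  rw [← hc i hi, algebraMap_mem_coeIdeal_iff] at hzi
  rw [hsum, algebraMap_mem_coeIdeal_iff]
  exact hM.sum_mul_notMem hi hui hzi hu

theorem exists_mul_notMem_coeIdeal {I I' : FractionalIdeal R⁰ K} (hI : I * I' = 1) {M : Ideal R}
    (hM : M ≠ ⊤) : ∃ a ∈ I, ∃ b ∈ I', a * b ∉ (M : FractionalIdeal R⁰ K) := by
  by_contra! h
  have : (1 : FractionalIdeal R⁰ K) ≤ M := hI ▸ mul_le.mpr h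
  rw [← coeIdeal_top, coeIdeal_le_coeIdeal] at this
  exact hM (top_le_iff.mp this)

theorem eq_one_of_le_one_of_forall_not_le_coeIdeal {F : FractionalIdeal R⁰ K} (hF : F ≤ 1)
    (h : ∀ M : Ideal R, M.IsMaximal → ¬F ≤ M) : F = 1 := by
  obtain ⟨F₀, rfl⟩ := le_one_iff_exists_coeIdeal.mp hF
  by_contra hne
  obtain ⟨M, hM, hF₀M⟩ := Ideal.exists_le_maximal F₀ fun h ↦ hne (h ▸ coeIdeal_top R⁰)
  exact h M hM ((coeIdeal_le_coeIdeal K).mpr hF₀M)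

theorem exists_spanSingleton_mul_add_coeIdeal_eq_one {I I' : FractionalIdeal R⁰ K}
    (hI : I * I' = 1) {J : Ideal R} (hJ : {M : Ideal R | M.IsMaximal ∧ J ≤ M}.Finite) :
    ∃ x : K, spanSingleton R⁰ x * I + J = 1 := by
  classical
  set s := hJ.toFinset
  have hs (M : Ideal R) : M ∈ s ↔ M.IsMaximal ∧ J ≤ M := hJ.mem_toFinset
  have hmax (M : Ideal R) (hM : M ∈ s) : M.IsMaximal := ((hs M).mp hM).1
  choose! a ha b hb hab using fun M hM ↦ exists_mul_notMem_coeIdeal hI (hmax M hM).ne_top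
  have hincomp (M : Ideal R) (hM : M ∈ s) : ∀ M' ∈ s.erase M, ¬M' ≤ M := fun M' hM' hle ↦
    Finset.ne_of_mem_erase hM' <|
      (hmax M' (Finset.mem_of_mem_erase hM')).eq_of_le (hmax M hM).ne_top hle
  choose! u hu hu' using fun M hM ↦ (hmax M hM).isPrime.exists_notMem_forall_mem _ (hincomp M hM)
  set x := ∑ M ∈ s, u M • b M
  have hx : x ∈ I' :=
    Submodule.sum_mem (I' : Submodule R K) fun M hM ↦ Submodule.smul_mem _ _ (hb M hM)
  refine ⟨x, eq_one_of_le_one_of_forall_not_le_coeIdeal ?_ fun M hM hle ↦ ?_⟩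
  · rw [← sup_eq_add]
    refine sup_le ?_ coeIdeal_le_one
    calc spanSingleton R⁰ x * I ≤ I' * I := mul_le_mul_left (spanSingleton_le_iff_mem.mpr hx) I
      _ = 1 := by rw [mul_comm, hI]
  rw [← sup_eq_add, sup_le_iff, coeIdeal_le_coeIdeal] at hle
  obtain ⟨hxIM, hJM⟩ := hle
  have hMs : M ∈ s := (hs M).mpr ⟨hM, hJM⟩
  have hxa : a M * x ∈ (M : FractionalIdeal R⁰ K) :=
    hxIM (mul_comm (a M) x ▸ mul_mem_mul (mem_spanSingleton_self R⁰ x) (ha M hMs))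
  refine sum_smul_notMem_coeIdeal (z := fun M' ↦ a M * b M') hM.isPrime hMs
    (fun M' hM' ↦ hI ▸ mul_mem_mul (ha M hMs) (hb M' hM')) (hu M hMs) (hab M hMs)
    (fun M' hM' hne ↦ hu' M' hM' M (Finset.mem_erase.mpr ⟨hne.symm, hMs⟩)) ?_
  simpa only [x, Finset.mul_sum, mul_smul_comm] using hxa

end FractionalIdeal

theorem stmt14 {K : Type*} [Field K] [NumberField K]
    (A : Subalgebra ℤ K) (hfree : Module.Free ℤ ↥A)
    (hrank : Module.finrank ℤ ↥A = Module.finrank ℚ K)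
    [IsFractionRing ↥A K]
    (I : FractionalIdeal (nonZeroDivisors ↥A) K)
    (hI : ∃ I' : FractionalIdeal (nonZeroDivisors ↥A) K, I * I' = 1)
    (J : Ideal ↥A) (hJ : J ≠ ⊥) :
    ∃ x : K, FractionalIdeal.spanSingleton (nonZeroDivisors ↥A) x * I +
      (J : FractionalIdeal (nonZeroDivisors ↥A) K) = 1 := by
  obtain ⟨I', hII'⟩ := hI
  have : Module.Finite ℤ A := Module.finite_of_finrank_pos (hrank ▸ Module.finrank_pos)
  have : Finite (A ⧸ J) := J.finiteQuotientOfFreeOfNeBot hJ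
  exact FractionalIdeal.exists_spanSingleton_mul_add_coeIdeal_eq_one hII'
    (J.finite_setOf_le_of_finite_quotient.subset fun _ hM ↦ hM.2)
end

section
/- Let A be an order in a number field K, J an invertible nonzero ideal of A, and m ∈ ℕ. Then the index satisfies [A : J^m] = [A : J]^m. More generally, if J and H are nonzero ideals of A with at least one invertible, then [A : JH] = [A : J]·[A : H]. -/
/-!
An invertible ideal `J` of `A` is an invertible `A`-module. For a nonzero ideal `M` the ring
`A ⧸ M` is finite, hence semilocal, so its Picard group is trivial and the invertible
`A ⧸ M`-module `J ⧸ M J ≅ (A ⧸ M) ⊗[A] J` is free of rank one. Therefore `[J : J M] = [A : M]`,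
and `[A : J M] = [A : J] [J : J M]`.
-/

open TensorProduct

theorem Submodule.card_quotient_smul {R M : Type*} [CommRing R] [AddCommGroup M] [Module R M]
    (I : Ideal R) (N : Submodule R M) :
    Nat.card (M ⧸ I • N) = Nat.card ((R ⧸ I) ⊗[R] N) * Nat.card (M ⧸ N) := by
  let e : (N ⧸ (I • N).comap N.subtype) ≃ₗ[R] (R ⧸ I) ⊗[R] N :=
    Submodule.quotEquivOfEq _ (I • (⊤ : Submodule R N)) (Submodule.map_injective_of_injective
      N.injective_subtype (by simp [Submodule.smul_le_right])) ≪≫ₗ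
        (quotTensorEquivQuotSMul N I).symm
  rw [← Nat.card_congr e.toEquiv]
  exact (AddSubgroup.relIndex_mul_index (H := (I • N).toAddSubgroup) (K := N.toAddSubgroup)
    Submodule.smul_le_right).symm

theorem Module.Invertible.card_tensor_of_finite_maximalSpectrum {R S N : Type*} [CommRing R]
    [CommRing S] [Algebra R S] [Finite (MaximalSpectrum S)] [AddCommGroup N] [Module R N]
    [Module.Invertible R N] :
    Nat.card (S ⊗[R] N) = Nat.card S :=
  Nat.card_congr (Module.Invertible.free_iff_linearEquiv.mp inferInstance).some.toEquiv

theorem Ideal.card_quotient_mul_of_invertible {R : Type*} [CommRing R] (J M : Ideal R)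
    [Module.Invertible R J] [Finite (MaximalSpectrum (R ⧸ M))] :
    Nat.card (R ⧸ J * M) = Nat.card (R ⧸ J) * Nat.card (R ⧸ M) := by
  rw [mul_comm J M, ← smul_eq_mul, Submodule.card_quotient_smul,
    Module.Invertible.card_tensor_of_finite_maximalSpectrum, mul_comm]

theorem Ideal.moduleInvertible_of_isUnit {R K : Type*} [CommRing R] [IsDomain R] [Field K]
    [Algebra R K] [IsFractionRing R K] (J : Ideal R)
    (hJ : IsUnit (J : FractionalIdeal (nonZeroDivisors R) K)) : Module.Invertible R J := by
  have hJ' := hJ.map (FractionalIdeal.coeSubmoduleHom (nonZeroDivisors R) K)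
  exact .congr (LinearEquiv.ofEq (hJ'.unit : Submodule R K) _ rfl ≪≫ₗ
    (Submodule.equivMapOfInjective (Algebra.linearMap R K)
      (FaithfulSMul.algebraMap_injective R K) J).symm)

theorem stmt16 {K : Type*} [Field K] [NumberField K]
    (A : Subalgebra ℤ K) (hfree : Module.Free ℤ ↥A)
    (hrank : Module.finrank ℤ ↥A = Module.finrank ℚ K)
    [IsFractionRing ↥A K]
    (J H : Ideal ↥A) (hJ : J ≠ ⊥) (hH : H ≠ ⊥)
    (hinv : (∃ I' : FractionalIdeal (nonZeroDivisors ↥A) K,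
                (J : FractionalIdeal (nonZeroDivisors ↥A) K) * I' = 1) ∨
            (∃ I' : FractionalIdeal (nonZeroDivisors ↥A) K,
                (H : FractionalIdeal (nonZeroDivisors ↥A) K) * I' = 1)) :
    Nat.card (↥A ⧸ (J * H)) = Nat.card (↥A ⧸ J) * Nat.card (↥A ⧸ H) ∧
    ((∃ I' : FractionalIdeal (nonZeroDivisors ↥A) K,
        (J : FractionalIdeal (nonZeroDivisors ↥A) K) * I' = 1) →
      ∀ m : ℕ, Nat.card (↥A ⧸ J ^ m) = Nat.card (↥A ⧸ J) ^ m) := by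
  have : Module.Finite ℤ A :=
    Module.finite_of_finrank_pos (hrank ▸ Module.finrank_pos)
  have hfin (I : Ideal A) (hI : I ≠ ⊥) : Finite (A ⧸ I) := Ideal.finiteQuotientOfFreeOfNeBot I hI
  have hmodInv {I : Ideal A} (h : ∃ I' : FractionalIdeal (nonZeroDivisors A) K,
      (I : FractionalIdeal (nonZeroDivisors A) K) * I' = 1) : Module.Invertible A I :=
    let ⟨_, hI'⟩ := h
    Ideal.moduleInvertible_of_isUnit I (IsUnit.of_mul_eq_one _ hI')
  refine ⟨?_, fun hJinv m ↦ ?_⟩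
  · have := hfin J hJ
    have := hfin H hH
    rcases hinv with h | h
    · have := hmodInv h
      exact Ideal.card_quotient_mul_of_invertible J H
    · have := hmodInv h
      rw [mul_comm J H, Ideal.card_quotient_mul_of_invertible H J, mul_comm]
  · have := hmodInv hJinv
    induction m with
    | zero => simp
    | succ n ih =>
      have := hfin _ (pow_ne_zero n hJ)
      rw [pow_succ', Ideal.card_quotient_mul_of_invertible, ih, pow_succ']
end

section
/- Let A ⊆ B be commutative rings. Then A is integrally closed in B if and only if whenever f ∈ A[X] factors as f = g·h in B[X] with g and h monic, both g and h lie in A[X]. -/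
/-! The coefficients of a monic factor of a monic polynomial are polynomial expressions in its
roots in a splitting extension, hence integral; this gives the forward direction. Conversely a
root `b` of a monic `f` yields the monic factorization `f = (X - b) * q`, and `b` is read off the
constant coefficient of the lifted factor `X - b`. -/

open Polynomial

namespace Polynomial

variable {A B : Type*} [CommRing A] [CommRing B]

theorem mem_lifts_of_monic_of_dvd_map [Algebra A B] [IsIntegrallyClosedIn A B] {f : A[X]}
    {g : B[X]} (hf : f.Monic) (hg : g.Monic) (hdvd : g ∣ f.map (algebraMap A B)) :
    g ∈ lifts (algebraMap A B) :=
  (lifts_iff_coeff_lifts g).mpr fun n =>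
    IsIntegrallyClosedIn.algebraMap_eq_of_integral (isIntegral_coeff_of_dvd f g hf hg hdvd n)

theorem X_sub_C_mem_lifts_iff {φ : A →+* B} {b : B} : X - C b ∈ lifts φ ↔ b ∈ φ.range := by
  constructor
  · intro h
    obtain ⟨a, ha⟩ := (lifts_iff_coeff_lifts _).mp h 0
    refine ⟨-a, ?_⟩
    simpa using congrArg Neg.neg ha
  · rintro ⟨a, rfl⟩
    exact (mem_lifts _).mpr ⟨X - C a, by simp⟩

theorem Monic.exists_map_eq_X_sub_C_mul {φ : A →+* B} {f : A[X]} (hf : f.Monic) {b : B}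
    (hb : f.eval₂ φ b = 0) : ∃ q : B[X], q.Monic ∧ f.map φ = (X - C b) * q := by
  have hroot : (f.map φ).IsRoot b := by rwa [IsRoot, eval_map]
  have hfq := (mul_divByMonic_eq_iff_isRoot.mpr hroot).symm
  exact ⟨_, (monic_X_sub_C b).of_mul_monic_left (hfq ▸ hf.map φ), hfq⟩

end Polynomial

theorem stmt17 {A B : Type*} [CommRing A] [CommRing B] (φ : A →+* B)
    (hφ : Function.Injective φ) :
    (∀ b : B, (∃ f : Polynomial A, f.Monic ∧ Polynomial.eval₂ φ b f = 0) →
        ∃ a : A, φ a = b) ↔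
    (∀ (f : Polynomial A) (g h : Polynomial B), g.Monic → h.Monic →
        f.map φ = g * h →
        (∃ g₀ : Polynomial A, g₀.map φ = g) ∧ (∃ h₀ : Polynomial A, h₀.map φ = h)) := by
  let := φ.toAlgebra
  constructor
  · intro H f g h hg hh hfgh
    have : IsIntegrallyClosedIn A B := isIntegrallyClosedIn_iff.mpr ⟨hφ, H _⟩
    have hf : f.Monic := monic_of_injective hφ (hfgh ▸ hg.mul hh)
    exact ⟨(mem_lifts g).mp (mem_lifts_of_monic_of_dvd_map hf hg (Dvd.intro h hfgh.symm)),
      (mem_lifts h).mp (mem_lifts_of_monic_of_dvd_map hf hh (Dvd.intro_left g hfgh.symm))⟩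
  · rintro H b ⟨f, hf, hfb⟩
    obtain ⟨q, hq, hfq⟩ := hf.exists_map_eq_X_sub_C_mul hfb
    exact X_sub_C_mem_lifts_iff.mp ((mem_lifts _).mpr (H f _ q (monic_X_sub_C b) hq hfq).1)
end

section
/- Let A ⊆ B be commutative rings with B an integral domain and A integrally closed in B. Then every monic polynomial f ∈ A[X] that is irreducible in A[X] remains irreducible in B[X]. -/
/-!
Let `g` be a monic factor of `f` in `B[X]`. Over a splitting field of `g` over `Frac B` the roots
of `g` are roots of the monic `f ∈ A[X]`, hence integral over `A`, and the coefficients of `g` are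
polynomials in them. So the coefficients of `g` are integral over `A`, and therefore lie in `A`:
every monic factorisation of `f` in `B[X]` already takes place in `A[X]`.
-/

open Polynomial

namespace Polynomial

variable {A B : Type*} [CommRing A] [CommRing B] [IsDomain B] [Algebra A B]

theorem isIntegral_coeff_of_monic_dvd_map {f : A[X]} (hf : f.Monic) {g : B[X]} (hg : g.Monic)
    (hdvd : g ∣ f.map (algebraMap A B)) (n : ℕ) : IsIntegral A (g.coeff n) := by
  let K := FractionRing B
  have hdvdK : g.map (algebraMap B K) ∣ f.map (algebraMap A K) := by
    rw [IsScalarTower.algebraMap_eq A B K, ← map_map]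
    exact Polynomial.map_dvd _ hdvd
  obtain ⟨x, hx⟩ := (lifts_iff_coeff_lifts _).mp
    (integralClosure.mem_lifts_of_monic_of_dvd_map K hf (hg.map _) hdvdK) n
  have hintK : IsIntegral A (algebraMap B K (g.coeff n)) := by
    rw [← coeff_map, ← hx]
    exact x.2
  exact (isIntegral_algHom_iff (IsScalarTower.toAlgHom A B K)
    (IsFractionRing.injective B K)).mp hintK

theorem Monic.lifts_of_dvd_map [IsIntegrallyClosedIn A B] {f : A[X]} (hf : f.Monic) {g : B[X]}
    (hg : g.Monic) (hdvd : g ∣ f.map (algebraMap A B)) : g ∈ lifts (algebraMap A B) :=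
  (lifts_iff_coeff_lifts g).mpr fun n =>
    IsIntegralClosure.isIntegral_iff.mp (isIntegral_coeff_of_monic_dvd_map hf hg hdvd n)

theorem Monic.irreducible_map_of_isIntegrallyClosedIn [IsIntegrallyClosedIn A B] {f : A[X]}
    (hf : f.Monic) (hirr : Irreducible f) : Irreducible (f.map (algebraMap A B)) := by
  have hinj : Function.Injective (algebraMap A B) := IsIntegralClosure.algebraMap_injective A A B
  have : IsDomain A := hinj.isDomain (algebraMap A B)
  obtain ⟨hf1, hfactor⟩ := hf.irreducible_iff_natDegree.mp hirr
  refine (hf.map _).irreducible_iff_natDegree.mpr ⟨fun h => hf1 ?_, fun g h hg hh hgh => ?_⟩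
  · exact map_injective _ hinj (h.trans (Polynomial.map_one _).symm)
  obtain ⟨G, hGg, -, hG⟩ :=
    lifts_and_degree_eq_and_monic (hf.lifts_of_dvd_map hg (Dvd.intro h hgh)) hg
  obtain ⟨H, hHh, -, hH⟩ :=
    lifts_and_degree_eq_and_monic (hf.lifts_of_dvd_map hh (Dvd.intro_left g hgh)) hh
  have hGH : G * H = f := map_injective _ hinj (by rw [Polynomial.map_mul, hGg, hHh, hgh])
  rw [← hGg, ← hHh, natDegree_map_eq_of_injective hinj, natDegree_map_eq_of_injective hinj]
  exact hfactor G H hG hH hGH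

end Polynomial

theorem stmt18 {A B : Type*} [CommRing A] [CommRing B] [IsDomain B] (φ : A →+* B)
    (hφ : Function.Injective φ)
    (hic : ∀ b : B, (∃ f : Polynomial A, f.Monic ∧ Polynomial.eval₂ φ b f = 0) →
        ∃ a : A, φ a = b)
    (f : Polynomial A) (hf : f.Monic) (hirr : Irreducible f) :
    Irreducible (f.map φ) := by
  let := φ.toAlgebra
  have : IsIntegrallyClosedIn A B :=
    ⟨hφ, ⟨hic _, fun ⟨a, ha⟩ => ha ▸ isIntegral_algebraMap⟩⟩
  exact hf.irreducible_map_of_isIntegrallyClosedIn hirr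
end

section
/- Let A ⊆ B be commutative rings with A integrally closed in B, and let f ∈ A[X] factor as f = g·h in B[X], where g ∈ A[X] is primitive (its coefficients generate the unit ideal of A). Then h ∈ A[X]. -/
/-!
A polynomial `g ∈ A[X]` whose coefficients generate the unit ideal is a non-zero-divisor on
polynomials with coefficients in any `A`-module `M`: by McCoy's theorem in the trivial square-zero
extension `A ⋉ M`, a zero divisor would be killed by some `r ≠ 0`, and then `r` annihilates the
ideal generated by the coefficients of `g`, which is `⊤`. Taking `M = B ⧸ N`, with `N` the
`A`-span of the coefficients of `f = g * h`, every coefficient of `h` lies in `N`, hence in the image of `A`.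
-/

open Polynomial TrivSqZeroExt

namespace Polynomial

variable {A : Type*} [CommRing A] {g : A[X]}

theorem eq_zero_of_forall_coeff_smul_eq_zero {M : Type*} [AddCommGroup M] [Module A M]
    (hg : Ideal.span (Set.range g.coeff) = ⊤) {x : M} (hx : ∀ i, g.coeff i • x = 0) : x = 0 := by
  have hker : Ideal.span (Set.range g.coeff) ≤ LinearMap.ker (LinearMap.toSpanSingleton A M x) :=
    Ideal.span_le.2 (by rintro _ ⟨i, rfl⟩; exact hx i)
  simpa using hker (hg ▸ Submodule.mem_top : (1 : A) ∈ Ideal.span (Set.range g.coeff))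

theorem coeff_mem_span_coeff_map_mul {B : Type*} [Ring B] [Algebra A B]
    (hg : Ideal.span (Set.range g.coeff) = ⊤) (h : B[X]) (n : ℕ) :
    h.coeff n ∈ Submodule.span A (Set.range (g.map (algebraMap A B) * h).coeff) := by
  set N := Submodule.span A (Set.range (g.map (algebraMap A B) * h).coeff)
  let : Module Aᵐᵒᵖ (B ⧸ N) := Module.compHom _ ((RingHom.id A).fromOpposite mul_comm)
  have : IsCentralScalar A (B ⧸ N) := ⟨fun _ _ => rfl⟩
  let ψ : B →ₗ[A] TrivSqZeroExt A (B ⧸ N) := (inrHom A (B ⧸ N)).comp N.mkQ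
  have hψ : ∀ b, ψ b = 0 ↔ b ∈ N := fun b =>
    (inr_injective.eq_iff' (inr_zero A)).trans (Submodule.Quotient.mk_eq_zero N)
  let G : (TrivSqZeroExt A (B ⧸ N))[X] := g.map (inlHom A (B ⧸ N))
  let H : (TrivSqZeroExt A (B ⧸ N))[X] := ofFinsupp (h.toFinsupp.map ψ.toAddMonoidHom)
  have hH : ∀ j, H.coeff j = ψ (h.coeff j) := fun j => rfl
  have hG : ∀ r : TrivSqZeroExt A (B ⧸ N), r • G = 0 → r = 0 := by
    intro r hr
    refine eq_zero_of_forall_coeff_smul_eq_zero hg fun i => ?_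
    simpa [G, ← inl_mul_eq_smul, mul_comm] using congr_arg (coeff · i) hr
  have hGH : G * H = 0 := by
    refine Polynomial.ext fun k => ?_
    have hcoeff : (G * H).coeff k = ψ ((g.map (algebraMap A B) * h).coeff k) := by
      simp only [coeff_mul, map_sum, G, hH, coeff_map, inlHom_apply, inl_mul_eq_smul,
        ← Algebra.smul_def, map_smul]
    rw [hcoeff, coeff_zero, hψ]
    exact Submodule.subset_span ⟨k, rfl⟩
  rw [← hψ, ← hH, eq_zero_of_mul_eq_zero_of_smul G hG H hGH, coeff_zero]

theorem lifts_of_map_eq_map_mul {B : Type*} [Ring B] [Algebra A B]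
    (hg : Ideal.span (Set.range g.coeff) = ⊤) {f : A[X]} {h : B[X]}
    (hfac : f.map (algebraMap A B) = g.map (algebraMap A B) * h) : h ∈ lifts (algebraMap A B) := by
  have hspan : Submodule.span A (Set.range (f.map (algebraMap A B)).coeff) ≤
      LinearMap.range (Algebra.linearMap A B) :=
    Submodule.span_le.2 <| by rintro _ ⟨k, rfl⟩; exact ⟨f.coeff k, (coeff_map _ k).symm⟩
  exact (lifts_iff_coeff_lifts h).2 fun n => hspan (hfac ▸ coeff_mem_span_coeff_map_mul hg h n)

end Polynomial

theorem stmt19_general {A B : Type*} [CommRing A] [CommRing B] (φ : A →+* B)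
    (f g : Polynomial A) (h : Polynomial B)
    (hprim : Ideal.span (Set.range g.coeff) = (⊤ : Ideal A))
    (hfac : f.map φ = g.map φ * h) :
    ∃ h₀ : Polynomial A, h₀.map φ = h := by
  let : Algebra A B := φ.toAlgebra
  exact (mem_lifts h).1 (lifts_of_map_eq_map_mul hprim hfac)

theorem stmt19 {A B : Type*} [CommRing A] [CommRing B] (φ : A →+* B)
    (hφ : Function.Injective φ)
    (hic : ∀ b : B, (∃ f : Polynomial A, f.Monic ∧ Polynomial.eval₂ φ b f = 0) →
        ∃ a : A, φ a = b)
    (f g : Polynomial A) (h : Polynomial B)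
    (hprim : Ideal.span (Set.range g.coeff) = (⊤ : Ideal A))
    (hfac : f.map φ = g.map φ * h) :
    ∃ h₀ : Polynomial A, h₀.map φ = h :=
  stmt19_general φ f g h hprim hfac
end
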